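/- Let q ∈ ℂ with q ≠ 0 and q² ≠ -1. Let S be the Solution III flip: S^{ij}_{kl} = (q²+1)⁻¹ times the array with nonzero entries S^{11}_{11} = 2q, S^{11}_{22} = 1-q², S^{12}_{12} = 1-q², S^{12}_{21} = 2q, S^{21}_{12} = 2q, S^{21}_{21} = q²-1, S^{22}_{11} = q²-1, S^{22}_{22} = 2q; let g^{ij} = δ^{ij} (the 2×2 identity), and let P be the wedge projector (nonzero entries P^{12}_{12} = 1/2, P^{12}_{21} = -q/2, P^{21}_{12} = -q⁻¹/2, P^{21}_{21} = 1/2). Then: (a) P^{ij}_{lm} + Σ_{h,k} S^{ij}_{hk} P^{hk}_{lm} = 0 for all i,j,l,m; (b) Σ_{l,m} P^{ij}_{lm} g^{lm} = 0 for all i,j; (c) Σ_{m,n,r} S^{im}_{ln} g^{nr} S^{jk}_{mr} = g^{ij} δ^k_l for all i,j,k,l; (d) if moreover |q| = 1, then Σ_{k,l} conj(S^{ji}_{kl}) S^{lk}_{mn} = δ^i_m δ^j_n for all i,j,m,n. -/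

import Mathlib

/-!
Parts (a)–(c) are identities between rational functions of `q`, checked entry by entry.
For (d), `S` has real coefficients, so `conj (S q) = S (conj q) = S q⁻¹` on the unit circle,
and `S q⁻¹` is `S q` with the entries `S^{ij}_{kl}`, `i ≠ l`, negated; this turns (d) into
one more rational identity, valid for every admissible `q`.
-/

open Finset

/-- The Solution III flip: `(q²+1)⁻¹` times the array with nonzero entries
`S^{11}_{11} = 2q`, `S^{11}_{22} = 1-q²`, `S^{12}_{12} = 1-q²`,
`S^{12}_{21} = 2q`, `S^{21}_{12} = 2q`, `S^{21}_{21} = q²-1`,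
`S^{22}_{11} = q²-1`, `S^{22}_{22} = 2q`. -/
noncomputable def solIIIS (q : ℂ) : Fin 2 → Fin 2 → Fin 2 → Fin 2 → ℂ :=
  fun i j k l =>
    (q ^ 2 + 1)⁻¹ *
      (if i = 0 ∧ j = 0 ∧ k = 0 ∧ l = 0 then 2 * q
      else if i = 0 ∧ j = 0 ∧ k = 1 ∧ l = 1 then 1 - q ^ 2
      else if i = 0 ∧ j = 1 ∧ k = 0 ∧ l = 1 then 1 - q ^ 2
      else if i = 0 ∧ j = 1 ∧ k = 1 ∧ l = 0 then 2 * q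
      else if i = 1 ∧ j = 0 ∧ k = 0 ∧ l = 1 then 2 * q
      else if i = 1 ∧ j = 0 ∧ k = 1 ∧ l = 0 then q ^ 2 - 1
      else if i = 1 ∧ j = 1 ∧ k = 0 ∧ l = 0 then q ^ 2 - 1
      else if i = 1 ∧ j = 1 ∧ k = 1 ∧ l = 1 then 2 * q
      else 0)

/-- The wedge-product projector of the Wess–Zumino calculus on the real quantum
plane: nonzero entries `P^{12}_{12} = 1/2`, `P^{12}_{21} = -q/2`,
`P^{21}_{12} = -q⁻¹/2`, `P^{21}_{21} = 1/2`. -/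
noncomputable def wedgeP (q : ℂ) : Fin 2 → Fin 2 → Fin 2 → Fin 2 → ℂ :=
  fun i j k l =>
    if i = 0 ∧ j = 1 ∧ k = 0 ∧ l = 1 then 1 / 2
    else if i = 0 ∧ j = 1 ∧ k = 1 ∧ l = 0 then -q / 2
    else if i = 1 ∧ j = 0 ∧ k = 0 ∧ l = 1 then -q⁻¹ / 2
    else if i = 1 ∧ j = 0 ∧ k = 1 ∧ l = 0 then 1 / 2
    else 0

/-- The Solution III metric: the 2×2 identity, `g^{ij} = δ^{ij}`. -/
noncomputable def solIIIg : Fin 2 → Fin 2 → ℂ :=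
  fun i j => if i = j then 1 else 0

section

variable {q : ℂ}

theorem wedgeP_add_sum_solIIIS_mul_wedgeP (hq : q ≠ 0) (hq2 : q ^ 2 + 1 ≠ 0) (i j l m : Fin 2) :
    wedgeP q i j l m + ∑ h : Fin 2, ∑ k : Fin 2, solIIIS q i j h k * wedgeP q h k l m = 0 := by
  fin_cases i <;> fin_cases j <;> fin_cases l <;> fin_cases m <;>
    simp [solIIIS, wedgeP, Fin.sum_univ_two] <;> field_simp <;> ring

theorem sum_wedgeP_mul_solIIIg (q : ℂ) (i j : Fin 2) :
    ∑ l : Fin 2, ∑ m : Fin 2, wedgeP q i j l m * solIIIg l m = 0 := by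
  fin_cases i <;> fin_cases j <;> simp [wedgeP, solIIIg, Fin.sum_univ_two]

theorem sum_solIIIS_mul_solIIIg_mul_solIIIS (hq2 : q ^ 2 + 1 ≠ 0) (i j k l : Fin 2) :
    ∑ m : Fin 2, ∑ n : Fin 2, ∑ r : Fin 2, solIIIS q i m l n * solIIIg n r * solIIIS q j k m r
      = solIIIg i j * if k = l then 1 else 0 := by
  fin_cases i <;> fin_cases j <;> fin_cases k <;> fin_cases l <;>
    simp [solIIIS, solIIIg, Fin.sum_univ_two] <;> field_simp <;> ring

theorem conj_solIIIS (q : ℂ) (i j k l : Fin 2) :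
    starRingEnd ℂ (solIIIS q i j k l) = solIIIS (starRingEnd ℂ q) i j k l := by
  simp only [solIIIS, map_mul, map_inv₀, apply_ite (starRingEnd ℂ), map_add, map_sub, map_pow,
    map_one, map_ofNat, map_zero]

theorem solIIIS_inv (hq : q ≠ 0) (i j k l : Fin 2) :
    solIIIS q⁻¹ i j k l = (if i = l then 1 else -1) * solIIIS q i j k l := by
  fin_cases i <;> fin_cases j <;> fin_cases k <;> fin_cases l <;>
    simp [solIIIS] <;> field_simp <;> ring

theorem sum_solIIIS_inv_mul_solIIIS (hq : q ≠ 0) (hq2 : q ^ 2 + 1 ≠ 0) (i j m n : Fin 2) :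
    ∑ k : Fin 2, ∑ l : Fin 2, solIIIS q⁻¹ j i k l * solIIIS q l k m n
      = (if i = m then 1 else 0) * (if j = n then 1 else 0) := by
  simp only [solIIIS_inv hq]
  fin_cases i <;> fin_cases j <;> fin_cases m <;> fin_cases n <;>
    simp [solIIIS, Fin.sum_univ_two] <;> field_simp <;> ring

end

/-- Solution III: (a) the consistency condition `π∘(σ+1) = 0`, (b) the
symmetry condition `g∘π = 0`, (c) metric compatibility, and (d) (for
`|q| = 1`) the flip reality condition all hold. -/
theorem solIII (q : ℂ) (hq : q ≠ 0) (hq2 : q ^ 2 ≠ -1) :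
    (∀ i j l m : Fin 2,
        wedgeP q i j l m
          + ∑ h : Fin 2, ∑ k : Fin 2, solIIIS q i j h k * wedgeP q h k l m = 0)
    ∧ (∀ i j : Fin 2,
        (∑ l : Fin 2, ∑ m : Fin 2, wedgeP q i j l m * solIIIg l m) = 0)
    ∧ (∀ i j k l : Fin 2,
        (∑ m : Fin 2, ∑ n : Fin 2, ∑ r : Fin 2,
            solIIIS q i m l n * solIIIg n r * solIIIS q j k m r)
          = solIIIg i j * (if k = l then 1 else 0))
    ∧ (‖q‖ = 1 →
        ∀ i j m n : Fin 2,
          (∑ k : Fin 2, ∑ l : Fin 2,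
              (starRingEnd ℂ) (solIIIS q j i k l) * solIIIS q l k m n)
            = (if i = m then 1 else 0) * (if j = n then 1 else 0)) := by
  have hq2' : q ^ 2 + 1 ≠ 0 := fun h => hq2 (eq_neg_of_add_eq_zero_left h)
  refine ⟨wedgeP_add_sum_solIIIS_mul_wedgeP hq hq2', sum_wedgeP_mul_solIIIg q,
    sum_solIIIS_mul_solIIIg_mul_solIIIS hq2', fun hunit i j m n => ?_⟩
  have hconj : starRingEnd ℂ q = q⁻¹ := (Complex.inv_eq_conj hunit).symm
  simp only [conj_solIIIS, hconj]
  exact sum_solIIIS_inv_mul_solIIIS hq hq2' i j m n
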